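/- There exists an absolute constant c̃₄ ≥ 0 such that, for every h > 0, every x ∈ ℝ, and every four times continuously differentiable real function w on [x − h, x + h], | (1/h) ∫_{−h}^{h} w(x + ξ)(1 − |ξ|/h) dξ − w(x) − (1/12)(w(x + h) − 2w(x) + w(x − h)) | ≤ c̃₄ h⁴ max_{y ∈ [x−h, x+h]} |w⁗(y)|. -/

import Mathlib

open intervalIntegral in
lemma integral_poly4 (a b c0 c1 c2 c3 c4 : ℝ) :
    ∫ ξ in a..b, (c0 + c1*ξ + c2*ξ^2 + c3*ξ^3 + c4*ξ^4) =
      (c0*b + c1/2*b^2 + c2/3*b^3 + c3/4*b^4 + c4/5*b^5)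
      - (c0*a + c1/2*a^2 + c2/3*a^3 + c3/4*a^4 + c4/5*a^5) := by
  have hder : ∀ ξ : ℝ, HasDerivAt
      (fun t : ℝ => c0*t + c1/2*t^2 + c2/3*t^3 + c3/4*t^4 + c4/5*t^5)
      (c0 + c1*ξ + c2*ξ^2 + c3*ξ^3 + c4*ξ^4) ξ := by
    intro ξ
    have h1 : HasDerivAt (fun t : ℝ => t) 1 ξ := hasDerivAt_id ξ
    have h2 : HasDerivAt (fun t : ℝ => t^2) (2*ξ) ξ := by simpa using hasDerivAt_pow 2 ξ
    have h3 : HasDerivAt (fun t : ℝ => t^3) (3*ξ^2) ξ := by simpa using hasDerivAt_pow 3 ξ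
    have h4 : HasDerivAt (fun t : ℝ => t^4) (4*ξ^3) ξ := by simpa using hasDerivAt_pow 4 ξ
    have h5 : HasDerivAt (fun t : ℝ => t^5) (5*ξ^4) ξ := by simpa using hasDerivAt_pow 5 ξ
    have H := ((((h1.const_mul c0).add (h2.const_mul (c1/2))).add
      (h3.const_mul (c2/3))).add (h4.const_mul (c3/4))).add (h5.const_mul (c4/5))
    exact H.congr_deriv (by ring)
  rw [integral_eq_sub_of_hasDerivAt (fun ξ _ => hder ξ)]
  · exact (Continuous.intervalIntegrable (by continuity) a b)

lemma hat_poly (h a0 a1 a2 a3 : ℝ) (hh : 0 < h) :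
    ∫ ξ in (-h)..h, (a0 + a1*ξ + a2*ξ^2 + a3*ξ^3) * (1 - |ξ|/h)
      = a0*h + a2*h^3/6 := by
  have hne : h ≠ 0 := ne_of_gt hh
  have hcont : Continuous (fun ξ : ℝ => (a0 + a1*ξ + a2*ξ^2 + a3*ξ^3) * (1 - |ξ|/h)) := by
    continuity
  have hsplit := intervalIntegral.integral_add_adjacent_intervals
    (hcont.intervalIntegrable (μ := MeasureTheory.volume) (-h) 0) (hcont.intervalIntegrable (μ := MeasureTheory.volume) 0 h)
  have e1 : ∫ ξ in (-h)..0, (a0 + a1*ξ + a2*ξ^2 + a3*ξ^3) * (1 - |ξ|/h)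
      = ∫ ξ in (-h)..0, (a0 + (a1+a0/h)*ξ + (a2+a1/h)*ξ^2 + (a3+a2/h)*ξ^3 + (a3/h)*ξ^4) := by
    apply intervalIntegral.integral_congr
    intro ξ hξ
    rw [Set.uIcc_of_le (by linarith)] at hξ
    beta_reduce
    rw [abs_of_nonpos hξ.2]
    field_simp
    ring
  have e2 : ∫ ξ in (0:ℝ)..h, (a0 + a1*ξ + a2*ξ^2 + a3*ξ^3) * (1 - |ξ|/h)
      = ∫ ξ in (0:ℝ)..h, (a0 + (a1-a0/h)*ξ + (a2-a1/h)*ξ^2 + (a3-a2/h)*ξ^3 + (-a3/h)*ξ^4) := by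
    apply intervalIntegral.integral_congr
    intro ξ hξ
    rw [Set.uIcc_of_le (by linarith)] at hξ
    beta_reduce
    rw [abs_of_nonneg hξ.1]
    field_simp
    ring
  rw [← hsplit, e1, e2, integral_poly4, integral_poly4]
  field_simp
  ring
theorem stmt_7 :
    ∃ c : ℝ, 0 ≤ c ∧ ∀ (h x : ℝ), 0 < h → ∀ w w1 w2 w3 w4 : ℝ → ℝ,
      (∀ y ∈ Set.Icc (x - h) (x + h),
        HasDerivWithinAt w (w1 y) (Set.Icc (x - h) (x + h)) y) →
      (∀ y ∈ Set.Icc (x - h) (x + h),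
        HasDerivWithinAt w1 (w2 y) (Set.Icc (x - h) (x + h)) y) →
      (∀ y ∈ Set.Icc (x - h) (x + h),
        HasDerivWithinAt w2 (w3 y) (Set.Icc (x - h) (x + h)) y) →
      (∀ y ∈ Set.Icc (x - h) (x + h),
        HasDerivWithinAt w3 (w4 y) (Set.Icc (x - h) (x + h)) y) →
      ContinuousOn w4 (Set.Icc (x - h) (x + h)) →
      |(1/h) * (∫ ξ in (-h)..h, w (x + ξ) * (1 - |ξ|/h))
          - w x - (1/12) * (w (x + h) - 2 * w x + w (x - h))|
        ≤ c * h^4 * sSup ((fun y => |w4 y|) '' Set.Icc (x - h) (x + h)) := by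
  refine ⟨3, by norm_num, ?_⟩
  intro h x hh w w1 w2 w3 w4 hw hw1 hw2 hw3 hw4c
  have hne : h ≠ 0 := ne_of_gt hh
  set s := Set.Icc (x - h) (x + h) with hs
  have hxs : x ∈ s := ⟨by linarith, by linarith⟩
  set M := sSup ((fun y => |w4 y|) '' s) with hMdef
  have hbdd : BddAbove ((fun y => |w4 y|) '' s) :=
    (isCompact_Icc.image_of_continuousOn hw4c.abs).bddAbove
  have hM : ∀ y ∈ s, |w4 y| ≤ M := fun y hy => le_csSup hbdd ⟨y, hy, rfl⟩
  have hM0 : 0 ≤ M := le_trans (abs_nonneg _) (hM x hxs)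
  have hdist : ∀ y ∈ s, ‖y - x‖ ≤ h := by
    intro y hy
    rw [Real.norm_eq_abs, abs_le]
    exact ⟨by simpa using by linarith [hy.1], by linarith [hy.2]⟩
  -- Taylor remainder bounds via iterated mean value inequality
  have hB3 : ∀ y ∈ s, |w3 y - w3 x| ≤ M * h := by
    intro y hy
    have := Convex.norm_image_sub_le_of_norm_hasDerivWithin_le
      (f := w3) (f' := w4) (s := s) (C := M)
      hw3 (fun z hz => by simpa using hM z hz) (convex_Icc _ _) hxs hy
    calc |w3 y - w3 x| ≤ M * ‖y - x‖ := by simpa using this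
      _ ≤ M * h := mul_le_mul_of_nonneg_left (hdist y hy) hM0
  have hB2 : ∀ y ∈ s, |w2 y - (w2 x + w3 x * (y - x))| ≤ M * h * h := by
    intro y hy
    have hf : ∀ z ∈ s, HasDerivWithinAt (fun t => w2 t - (w2 x + w3 x * (t - x)))
        (w3 z - w3 x) s z := by
      intro z hz
      have hp : HasDerivAt (fun t : ℝ => w2 x + w3 x * (t - x)) (w3 x) z := by
        simpa using (((hasDerivAt_id z).sub_const x).const_mul (w3 x)).const_add (w2 x)
      exact (hw2 z hz).sub hp.hasDerivWithinAt
    have := Convex.norm_image_sub_le_of_norm_hasDerivWithin_le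
      (s := s) (C := M * h) hf (fun z hz => by simpa using hB3 z hz)
      (convex_Icc _ _) hxs hy
    calc |w2 y - (w2 x + w3 x * (y - x))| ≤ (M * h) * ‖y - x‖ := by simpa using this
      _ ≤ M * h * h := mul_le_mul_of_nonneg_left (hdist y hy) (by positivity)
  have hB1 : ∀ y ∈ s, |w1 y - (w1 x + w2 x * (y - x) + w3 x / 2 * (y - x)^2)|
      ≤ M * h * h * h := by
    intro y hy
    have hf : ∀ z ∈ s, HasDerivWithinAt
        (fun t => w1 t - (w1 x + w2 x * (t - x) + w3 x / 2 * (t - x)^2))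
        (w2 z - (w2 x + w3 x * (z - x))) s z := by
      intro z hz
      have hp : HasDerivAt (fun t : ℝ => w1 x + w2 x * (t - x) + w3 x / 2 * (t - x)^2)
          (w2 x + w3 x * (z - x)) z := by
        have h1 : HasDerivAt (fun t : ℝ => w1 x + w2 x * (t - x)) (w2 x) z := by
          simpa using (((hasDerivAt_id z).sub_const x).const_mul (w2 x)).const_add (w1 x)
        have h2 : HasDerivAt (fun t : ℝ => w3 x / 2 * (t - x)^2) (w3 x * (z - x)) z := by
          have := (((hasDerivAt_id z).sub_const x).pow 2).const_mul (w3 x / 2)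
          exact this.congr_deriv (by simp; ring)
        exact h1.add h2
      exact (hw1 z hz).sub hp.hasDerivWithinAt
    have := Convex.norm_image_sub_le_of_norm_hasDerivWithin_le
      (s := s) (C := M * h * h) hf (fun z hz => by simpa using hB2 z hz)
      (convex_Icc _ _) hxs hy
    calc |w1 y - (w1 x + w2 x * (y - x) + w3 x / 2 * (y - x)^2)|
        ≤ (M * h * h) * ‖y - x‖ := by simpa using this
      _ ≤ M * h * h * h := mul_le_mul_of_nonneg_left (hdist y hy) (by positivity)
  have hB0 : ∀ y ∈ s,
      |w y - (w x + w1 x * (y - x) + w2 x / 2 * (y - x)^2 + w3 x / 6 * (y - x)^3)|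
      ≤ M * h * h * h * h := by
    intro y hy
    have hf : ∀ z ∈ s, HasDerivWithinAt
        (fun t => w t - (w x + w1 x * (t - x) + w2 x / 2 * (t - x)^2 + w3 x / 6 * (t - x)^3))
        (w1 z - (w1 x + w2 x * (z - x) + w3 x / 2 * (z - x)^2)) s z := by
      intro z hz
      have hp : HasDerivAt
          (fun t : ℝ => w x + w1 x * (t - x) + w2 x / 2 * (t - x)^2 + w3 x / 6 * (t - x)^3)
          (w1 x + w2 x * (z - x) + w3 x / 2 * (z - x)^2) z := by
        have h1 : HasDerivAt (fun t : ℝ => w x + w1 x * (t - x)) (w1 x) z := by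
          simpa using (((hasDerivAt_id z).sub_const x).const_mul (w1 x)).const_add (w x)
        have h2 : HasDerivAt (fun t : ℝ => w2 x / 2 * (t - x)^2) (w2 x * (z - x)) z := by
          have := (((hasDerivAt_id z).sub_const x).pow 2).const_mul (w2 x / 2)
          exact this.congr_deriv (by simp; ring)
        have h3 : HasDerivAt (fun t : ℝ => w3 x / 6 * (t - x)^3) (w3 x / 2 * (z - x)^2) z := by
          have := (((hasDerivAt_id z).sub_const x).pow 3).const_mul (w3 x / 6)
          exact this.congr_deriv (by simp; ring)
        exact (h1.add h2).add h3
      exact (hw z hz).sub hp.hasDerivWithinAt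
    have := Convex.norm_image_sub_le_of_norm_hasDerivWithin_le
      (s := s) (C := M * h * h * h) hf (fun z hz => by simpa using hB1 z hz)
      (convex_Icc _ _) hxs hy
    calc |w y - (w x + w1 x * (y - x) + w2 x / 2 * (y - x)^2 + w3 x / 6 * (y - x)^3)|
        ≤ (M * h * h * h) * ‖y - x‖ := by simpa using this
      _ ≤ M * h * h * h * h := mul_le_mul_of_nonneg_left (hdist y hy) (by positivity)
  -- fun_prop / integrability
  have hwc : ContinuousOn w s := fun y hy => (hw y hy).continuousWithinAt
  have hmaps : ∀ ξ ∈ Set.Icc (-h) h, x + ξ ∈ s := by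
    intro ξ hξ
    exact ⟨by linarith [hξ.1], by linarith [hξ.2]⟩
  have hRc : ContinuousOn
      (fun ξ : ℝ => (w (x + ξ) - (w x + w1 x * ξ + w2 x / 2 * ξ^2 + w3 x / 6 * ξ^3))
        * (1 - |ξ|/h)) (Set.Icc (-h) h) := by
    apply ContinuousOn.mul
    · apply ContinuousOn.sub
      · exact hwc.comp (continuous_const.add continuous_id).continuousOn hmaps
      · exact (by fun_prop : Continuous fun ξ : ℝ =>
          w x + w1 x * ξ + w2 x / 2 * ξ^2 + w3 x / 6 * ξ^3).continuousOn
    · exact (by fun_prop : Continuous fun ξ : ℝ => 1 - |ξ|/h).continuousOn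
  have hPc : Continuous
      (fun ξ : ℝ => (w x + w1 x * ξ + w2 x / 2 * ξ^2 + w3 x / 6 * ξ^3) * (1 - |ξ|/h)) := by
    fun_prop
  have huIcc : Set.uIcc (-h) h = Set.Icc (-h) h := Set.uIcc_of_le (by linarith)
  have hIntR : IntervalIntegrable
      (fun ξ : ℝ => (w (x + ξ) - (w x + w1 x * ξ + w2 x / 2 * ξ^2 + w3 x / 6 * ξ^3))
        * (1 - |ξ|/h)) MeasureTheory.volume (-h) h := by
    apply ContinuousOn.intervalIntegrable
    rwa [huIcc]
  have hIntP : IntervalIntegrable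
      (fun ξ : ℝ => (w x + w1 x * ξ + w2 x / 2 * ξ^2 + w3 x / 6 * ξ^3) * (1 - |ξ|/h))
      MeasureTheory.volume (-h) h := hPc.intervalIntegrable _ _
  -- split the integral
  have hIw : (∫ ξ in (-h)..h, w (x + ξ) * (1 - |ξ|/h))
      = (∫ ξ in (-h)..h, (w x + w1 x * ξ + w2 x / 2 * ξ^2 + w3 x / 6 * ξ^3) * (1 - |ξ|/h))
        + ∫ ξ in (-h)..h,
          (w (x + ξ) - (w x + w1 x * ξ + w2 x / 2 * ξ^2 + w3 x / 6 * ξ^3)) * (1 - |ξ|/h) := by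
    rw [← intervalIntegral.integral_add hIntP hIntR]
    apply intervalIntegral.integral_congr
    intro ξ _
    ring
  have hIPval : (∫ ξ in (-h)..h,
      (w x + w1 x * ξ + w2 x / 2 * ξ^2 + w3 x / 6 * ξ^3) * (1 - |ξ|/h))
      = w x * h + (w2 x / 2) * h^3 / 6 := hat_poly h (w x) (w1 x) (w2 x / 2) (w3 x / 6) hh
  -- bound the remainder integral
  have hIRbound : |∫ ξ in (-h)..h,
      (w (x + ξ) - (w x + w1 x * ξ + w2 x / 2 * ξ^2 + w3 x / 6 * ξ^3)) * (1 - |ξ|/h)|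
      ≤ (M * h * h * h * h) * (2 * h) := by
    have key := intervalIntegral.norm_integral_le_of_norm_le_const
      (C := M * h * h * h * h)
      (f := fun ξ : ℝ => (w (x + ξ) - (w x + w1 x * ξ + w2 x / 2 * ξ^2 + w3 x / 6 * ξ^3))
        * (1 - |ξ|/h)) (a := -h) (b := h) ?_
    · calc |∫ ξ in (-h)..h, (w (x + ξ) - (w x + w1 x * ξ + w2 x / 2 * ξ^2 + w3 x / 6 * ξ^3))
            * (1 - |ξ|/h)| ≤ (M * h * h * h * h) * |h - (-h)| := key
        _ = (M * h * h * h * h) * (2 * h) := by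
            rw [show h - (-h) = 2 * h by ring, abs_of_pos (by linarith)]
    · intro ξ hξ
      rw [Set.uIoc_of_le (by linarith : -h ≤ h)] at hξ
      have hξ2 : |ξ| ≤ h := abs_le.2 ⟨le_of_lt hξ.1, hξ.2⟩
      have hfac : |1 - |ξ|/h| ≤ 1 := by
        rw [abs_le]
        constructor
        · have : |ξ|/h ≤ 1 := (div_le_one hh).2 hξ2
          linarith
        · have : 0 ≤ |ξ|/h := div_nonneg (abs_nonneg _) (le_of_lt hh)
          linarith
      have hmem : x + ξ ∈ s := hmaps ξ ⟨le_of_lt hξ.1, hξ.2⟩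
      have hR := hB0 (x + ξ) hmem
      rw [Real.norm_eq_abs, abs_mul]
      have : |w (x + ξ) - (w x + w1 x * ξ + w2 x / 2 * ξ^2 + w3 x / 6 * ξ^3)|
          ≤ M * h * h * h * h := by
        convert hR using 3 <;> ring_nf
      calc |w (x + ξ) - (w x + w1 x * ξ + w2 x / 2 * ξ^2 + w3 x / 6 * ξ^3)| * |1 - |ξ|/h|
          ≤ (M * h * h * h * h) * 1 :=
            mul_le_mul this hfac (abs_nonneg _) (by positivity)
        _ = M * h * h * h * h := mul_one _
  -- endpoint remainders
  have hRp : |w (x + h) - (w x + w1 x * h + w2 x / 2 * h^2 + w3 x / 6 * h^3)|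
      ≤ M * h * h * h * h := by
    have := hB0 (x + h) ⟨by linarith, le_refl _⟩
    convert this using 3 <;> ring_nf
  have hRm : |w (x - h) - (w x - w1 x * h + w2 x / 2 * h^2 - w3 x / 6 * h^3)|
      ≤ M * h * h * h * h := by
    have := hB0 (x - h) ⟨le_refl _, by linarith⟩
    convert this using 3 <;> ring_nf
  -- final algebra
  set IR := ∫ ξ in (-h)..h,
    (w (x + ξ) - (w x + w1 x * ξ + w2 x / 2 * ξ^2 + w3 x / 6 * ξ^3)) * (1 - |ξ|/h) with hIR
  set Rp := w (x + h) - (w x + w1 x * h + w2 x / 2 * h^2 + w3 x / 6 * h^3) with hRpdef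
  set Rm := w (x - h) - (w x - w1 x * h + w2 x / 2 * h^2 - w3 x / 6 * h^3) with hRmdef
  have key : (1/h) * (∫ ξ in (-h)..h, w (x + ξ) * (1 - |ξ|/h))
      - w x - (1/12) * (w (x + h) - 2 * w x + w (x - h))
      = (1/h) * IR - (Rp + Rm)/12 := by
    rw [hIw, hIPval]
    have e1 : w (x + h) = Rp + (w x + w1 x * h + w2 x / 2 * h^2 + w3 x / 6 * h^3) := by
      rw [hRpdef]; ring
    have e2 : w (x - h) = Rm + (w x - w1 x * h + w2 x / 2 * h^2 - w3 x / 6 * h^3) := by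
      rw [hRmdef]; ring
    rw [e1, e2]
    field_simp
    ring
  rw [key]
  have step1 : |(1/h) * IR - (Rp + Rm)/12| ≤ (1/h) * |IR| + (|Rp| + |Rm|)/12 := by
    have h1 : |(1/h) * IR| = (1/h) * |IR| := by
      rw [abs_mul, abs_of_pos (by positivity : (0:ℝ) < 1/h)]
    have h2 : |(Rp + Rm)/12| ≤ (|Rp| + |Rm|)/12 := by
      rw [abs_div, show |(12:ℝ)| = 12 by norm_num]
      gcongr
      exact abs_add_le _ _
    calc |(1/h) * IR - (Rp + Rm)/12| ≤ |(1/h) * IR| + |(Rp + Rm)/12| := abs_sub _ _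
      _ ≤ (1/h) * |IR| + (|Rp| + |Rm|)/12 := by rw [h1]; exact add_le_add_right h2 _
  have step2 : (1/h) * |IR| ≤ 2 * (M * h^4) := by
    have : (1/h) * |IR| ≤ (1/h) * ((M * h * h * h * h) * (2 * h)) :=
      mul_le_mul_of_nonneg_left hIRbound (by positivity)
    calc (1/h) * |IR| ≤ (1/h) * ((M * h * h * h * h) * (2 * h)) := this
      _ = 2 * (M * h^4) := by field_simp
  have step3 : (|Rp| + |Rm|)/12 ≤ (M * h^4)/6 := by
    have : |Rp| + |Rm| ≤ 2 * (M * h * h * h * h) := by linarith [hRp, hRm]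
    calc (|Rp| + |Rm|)/12 ≤ (2 * (M * h * h * h * h))/12 := by linarith
      _ = (M * h^4)/6 := by ring
  have hMh4 : 0 ≤ M * h^4 := by positivity
  calc |(1/h) * IR - (Rp + Rm)/12| ≤ (1/h) * |IR| + (|Rp| + |Rm|)/12 := step1
    _ ≤ 2 * (M * h^4) + (M * h^4)/6 := by linarith
    _ ≤ 3 * h^4 * M := by linarith
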